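/- Let k be a commutative ring, R a commutative k-algebra, and L a Lie algebra over R (hence also over k, with compatible scalar actions). Assume that every k-linear endomorphism χ of L satisfying χ([x,y]) = [χ(x),y] = [x,χ(y)] for all x, y ∈ L is of the form x ↦ r • x for a unique r ∈ R. Then for every k-linear Lie derivation δ : L → L there exists a unique k-derivation d : R → R such that δ(r • x) = d(r) • x + r • δ(x) for all r ∈ R and x ∈ L. Moreover the resulting map η : Der_k(L) → Der_k(R), δ ↦ d, is a homomorphism of Lie algebras over k, and its kernel is exactly the set of R-linear derivations of L: η(δ) = 0 if and only if δ(r • x) = r • δ(x) for all r ∈ R, x ∈ L. In particular the R-linear derivations form a Lie ideal of Der_k(L). -/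

import Mathlib

/-!
For a Lie derivation `δ` and `r ∈ R`, the defect `x ↦ δ (r • x) - r • δ x` lies in the centroid
of `L`, so by hypothesis it is the homothety by a unique `d r ∈ R` (`d` is the anchor of `δ`, as
for Lie–Rinehart algebras). The uniqueness part of the hypothesis says that `R` acts faithfully
on `L`, and faithfulness turns every identity of the form `δ (r • x) = s • x + r • δ x` into an
equation in `R`: this makes `d` a derivation, makes `δ ↦ d` additive, `k`-linear and compatible
with commutators, and identifies its kernel.
-/

section Anchor

variable {k R M : Type*} [CommRing k] [CommRing R] [Algebra k R]
  [AddCommGroup M] [Module k M] [Module R M] [IsScalarTower k R M]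

def IsAnchor (d : R → R) (δ : M → M) : Prop :=
  ∀ (r : R) (x : M), δ (r • x) = d r • x + r • δ x

theorem isAnchor_zero_iff {δ : M → M} :
    IsAnchor (0 : R → R) δ ↔ ∀ (r : R) (x : M), δ (r • x) = r • δ x := by
  simp only [IsAnchor, Pi.zero_apply, zero_smul, zero_add]

namespace IsAnchor

variable {d d₁ d₂ : R → R} {δ δ₁ δ₂ : M → M}

theorem apply_eq [FaithfulSMul R M] (h : IsAnchor d δ) {r s : R}
    (hs : ∀ x : M, δ (r • x) = s • x + r • δ x) : d r = s :=
  eq_of_smul_eq_smul fun x => add_right_cancel ((h r x).symm.trans (hs x))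

theorem unique [FaithfulSMul R M] (h : IsAnchor d₁ δ) (h' : IsAnchor d₂ δ) : d₁ = d₂ :=
  funext fun r => h.apply_eq (h' r)

theorem add (h₁ : IsAnchor d₁ δ₁) (h₂ : IsAnchor d₂ δ₂) :
    IsAnchor (d₁ + d₂) (δ₁ + δ₂) := by
  intro r x
  simp only [Pi.add_apply, h₁ r x, h₂ r x, add_smul, smul_add]
  abel

theorem smul (c : k) (h : IsAnchor d δ) : IsAnchor (c • d) (c • δ) := by
  intro r x
  simp only [Pi.smul_apply, h r x, smul_add, smul_assoc, smul_comm r c (δ x)]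

theorem commutator {F : Type*} [FunLike F M M] [AddHomClass F M M] {δ₁ δ₂ : F}
    (h₁ : IsAnchor d₁ δ₁) (h₂ : IsAnchor d₂ δ₂) :
    IsAnchor (fun r => d₁ (d₂ r) - d₂ (d₁ r)) (fun x => δ₁ (δ₂ x) - δ₂ (δ₁ x)) := by
  intro r x
  simp only [h₁ _ _, h₂ _ _, map_add, sub_smul, smul_sub]
  abel

theorem exists_derivation [FaithfulSMul R M] {F : Type*} [FunLike F M M]
    [LinearMapClass F k M M] {δ : F} (h : IsAnchor d δ) :
    ∃ D : Derivation k R R, ⇑D = d := by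
  refine ⟨Derivation.mk' ⟨⟨d, fun r s => h.apply_eq fun x => ?_⟩, fun c r => h.apply_eq
    fun x => ?_⟩ fun r s => h.apply_eq fun x => ?_, rfl⟩
  · rw [add_smul, map_add, h r x, h s x, add_smul, add_smul]
    abel
  · rw [smul_assoc, map_smul, h r x, smul_add, smul_assoc, smul_assoc, RingHom.id_apply]
  · show δ ((r * s) • x) = (r • d s + s • d r) • x + (r * s) • δ x
    rw [mul_smul, h r (s • x), h s x, smul_add, smul_smul, smul_smul, smul_smul, smul_eq_mul,
      smul_eq_mul, add_smul, mul_comm (d r) s]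
    abel

end IsAnchor

end Anchor

section LieAlgebra

variable {k R L : Type*} [CommRing k] [CommRing R] [Algebra k R]
  [LieRing L] [LieAlgebra R L] [LieAlgebra k L] [IsScalarTower k R L]

def LinearMap.IsCentroidal (χ : L →ₗ[k] L) : Prop :=
  ∀ x y : L, χ ⁅x, y⁆ = ⁅χ x, y⁆ ∧ χ ⁅x, y⁆ = ⁅x, χ y⁆

namespace LieDerivation

def smulDefect (δ : LieDerivation k L L) (r : R) : L →ₗ[k] L where
  toFun x := δ (r • x) - r • δ x
  map_add' x y := by
    simp only [smul_add, map_add]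
    abel
  map_smul' c x := by
    simp only [RingHom.id_apply, smul_comm r c, map_smul, smul_sub]

variable (δ : LieDerivation k L L) (r : R)

theorem smulDefect_apply (x : L) : δ.smulDefect r x = δ (r • x) - r • δ x := rfl

theorem smulDefect_isCentroidal : (δ.smulDefect r).IsCentroidal := by
  refine fun x y => ⟨?_, ?_⟩
  · simp only [smulDefect_apply, ← smul_lie, apply_lie_eq_add, sub_lie, smul_add]
    abel
  · simp only [smulDefect_apply, ← lie_smul, apply_lie_eq_add, lie_sub, smul_add]
    abel

end LieDerivation

def lieHomOfIsAnchor [FaithfulSMul R L] (η : LieDerivation k L L → Derivation k R R)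
    (hη : ∀ δ, IsAnchor (η δ) δ) : LieDerivation k L L →ₗ⁅k⁆ Derivation k R R where
  toFun := η
  map_add' δ₁ δ₂ := DFunLike.coe_injective <| (hη _).unique <| by
    rw [LieDerivation.coe_add]
    exact (hη δ₁).add (hη δ₂)
  map_smul' c δ := DFunLike.coe_injective <| (hη _).unique <| by
    rw [LieDerivation.coe_smul]
    exact (hη δ).smul c
  map_lie' {δ₁ δ₂} := DFunLike.coe_injective <| (hη _).unique <| by
    have hL : ⇑⁅δ₁, δ₂⁆ = fun x => δ₁ (δ₂ x) - δ₂ (δ₁ x) :=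
      funext LieDerivation.commutator_apply
    have hR : ⇑⁅η δ₁, η δ₂⁆ = fun r => η δ₁ (η δ₂ r) - η δ₂ (η δ₁ r) :=
      funext fun _ => Derivation.commutator_apply ..
    rw [hL, hR]
    exact (hη δ₁).commutator (hη δ₂)

theorem faithfulSMul_of_centroid
    (hcent : ∀ χ : L →ₗ[k] L, χ.IsCentroidal → ∃! r : R, ∀ x : L, χ x = r • x) :
    FaithfulSMul R L := by
  refine ⟨fun {s t} hst => ?_⟩
  obtain ⟨r, -, hr⟩ := hcent (s • LinearMap.id) fun x y => by simp [smul_lie, lie_smul]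
  exact (hr s fun x => rfl).trans (hr t fun x => hst x).symm

theorem exists_derivation_isAnchor_of_centroid
    (hcent : ∀ χ : L →ₗ[k] L, χ.IsCentroidal → ∃! r : R, ∀ x : L, χ x = r • x)
    (δ : LieDerivation k L L) :
    ∃ D : Derivation k R R, IsAnchor D δ := by
  have := faithfulSMul_of_centroid hcent
  choose d hd using fun r : R => (hcent _ (δ.smulDefect_isCentroidal r)).exists
  have hanchor : IsAnchor d δ := fun r x => by
    rw [← hd r x, LieDerivation.smulDefect_apply, sub_add_cancel]
  obtain ⟨D, hD⟩ := hanchor.exists_derivation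
  exact ⟨D, hD ▸ hanchor⟩

end LieAlgebra

/-- Let `k` be a commutative ring, `R` a commutative `k`-algebra and
`L` a Lie algebra over `R` (hence over `k`, with compatible actions).  Assume the
canonical map `R → Ctd_k(L)` is an isomorphism: every `k`-linear endomorphism `χ` of
`L` with `χ ⁅x,y⁆ = ⁅χ x, y⁆ = ⁅x, χ y⁆` is the homothety by a unique `r ∈ R`.  Then
there is a Lie algebra homomorphism `η : Der_k(L) → Der_k(R)` characterised by
`δ (r • x) = η δ r • x + r • δ x`; the derivation `η δ` is unique with this property,
and the kernel of `η` is exactly the set of `R`-linear derivations of `L`. -/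
theorem eta_exists_unique_lieHom_kernel
    (k : Type*) [CommRing k] (R : Type*) [CommRing R] [Algebra k R]
    (L : Type*) [LieRing L] [LieAlgebra R L]
    [LieAlgebra k L] [IsScalarTower k R L]
    (hcent : ∀ χ : L →ₗ[k] L,
      (∀ x y : L, χ ⁅x, y⁆ = ⁅χ x, y⁆ ∧ χ ⁅x, y⁆ = ⁅x, χ y⁆) →
      ∃! r : R, ∀ x : L, χ x = r • x) :
    ∃ η : LieDerivation k L L →ₗ⁅k⁆ Derivation k R R,
      (∀ (δ : LieDerivation k L L) (r : R) (x : L),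
        δ (r • x) = η δ r • x + r • δ x) ∧
      (∀ (δ : LieDerivation k L L) (d : Derivation k R R),
        (∀ (r : R) (x : L), δ (r • x) = d r • x + r • δ x) → η δ = d) ∧
      (∀ δ : LieDerivation k L L,
        η δ = 0 ↔ ∀ (r : R) (x : L), δ (r • x) = r • δ x) := by
  have := faithfulSMul_of_centroid hcent
  choose η hη using exists_derivation_isAnchor_of_centroid hcent
  refine ⟨lieHomOfIsAnchor η hη, hη, fun δ d hd => DFunLike.coe_injective ((hη δ).unique hd),
    fun δ => ?_⟩
  change η δ = 0 ↔ _
  rw [← isAnchor_zero_iff]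
  refine ⟨fun h => ?_, fun h => DFunLike.coe_injective ((hη δ).unique h)⟩
  simpa [h] using hη δ
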